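/- The ground state wavefunction ψ^C_0(x_1,...,x_N) = L^{−N/2}(N!)^{−1/2} ∏_{1≤j<k≤N} 2|sin(π(x_k−x_j)/L)| is normalized: ∫_0^L⋯∫_0^L |ψ^C_0(x_1,...,x_N)|² dx_1⋯dx_N = 1. -/

import Mathlib

open Real MeasureTheory

/-- The integral of `exp (2πi c t / L)` over `[0, L]` is `L` if `c = 0` and `0` otherwise. -/
lemma intE (L : ℝ) (hL : 0 < L) (c : ℤ) :
    ∫ t in Set.Icc (0:ℝ) L, Complex.exp (2 * π * Complex.I * c * t / L) =
      if c = 0 then (L : ℂ) else 0 := by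
  rw [MeasureTheory.integral_Icc_eq_integral_Ioc, ← intervalIntegral.integral_of_le hL.le]
  rcases eq_or_ne c 0 with h | h
  · simp [h]
  · have hk : (2 * π * Complex.I * c / L : ℂ) ≠ 0 := by
      simp [Complex.ofReal_ne_zero, Real.pi_ne_zero, Complex.I_ne_zero, h, hL.ne']
    have : ∀ t : ℝ, (2 * π * Complex.I * c * t / L : ℂ) = (2 * π * Complex.I * c / L) * t := by
      intro t; ring
    simp_rw [this]
    rw [integral_exp_mul_complex hk]
    have h1 : (2 * π * Complex.I * c / L : ℂ) * L = c * (2 * π * Complex.I) := by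
      have : (L : ℂ) ≠ 0 := by exact_mod_cast hL.ne'
      field_simp
    rw [h1, Complex.exp_int_mul_two_pi_mul_I]
    simp [h]

lemma trig (a b : ℝ) :
    Complex.normSq (Complex.exp (a * Complex.I) - Complex.exp (b * Complex.I)) =
      (2 * |Real.sin ((a - b) / 2)|) ^ 2 := by
  rw [Complex.exp_mul_I, Complex.exp_mul_I]
  have h1 := Real.cos_two_mul ((a - b) / 2)
  rw [show 2 * ((a - b) / 2) = a - b by ring] at h1
  have h0 := Real.sin_sq_add_cos_sq ((a - b) / 2)
  have h2 := Real.cos_sub a b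
  have h3 := Real.sin_sq_add_cos_sq a
  have h4 := Real.sin_sq_add_cos_sq b
  have habs : |Real.sin ((a - b) / 2)| ^ 2 = Real.sin ((a - b) / 2) ^ 2 := sq_abs _
  simp only [Complex.normSq_apply, Complex.sub_re, Complex.sub_im, Complex.add_re,
    Complex.add_im, Complex.mul_re, Complex.mul_im, Complex.I_re, Complex.I_im,
    Complex.cos_ofReal_re, Complex.cos_ofReal_im, Complex.sin_ofReal_re, Complex.sin_ofReal_im,
    Complex.ofReal_re, Complex.ofReal_im]
  nlinarith [h0, h1, h2, h3, h4, habs]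

lemma sq_prod_eq_normSq (N : ℕ) (L : ℝ) (hL : 0 < L) (x : Fin N → ℝ) :
    (∏ j : Fin N, ∏ k ∈ Finset.Ioi j, (2 * |Real.sin (π * (x k - x j) / L)|)) ^ 2 =
      Complex.normSq
        (Matrix.det (Matrix.vandermonde fun m => Complex.exp ((2 * π * x m / L : ℝ) * Complex.I))) := by
  rw [Matrix.det_vandermonde, map_prod]
  rw [← Finset.prod_pow]
  refine Finset.prod_congr rfl fun j _ => ?_
  rw [map_prod, ← Finset.prod_pow]
  refine Finset.prod_congr rfl fun k _ => ?_
  rw [trig]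
  congr 2
  field_simp

lemma box_factor (N : ℕ) (L : ℝ) (g : Fin N → ℝ → ℂ) :
    ∫ x : Fin N → ℝ in Set.univ.pi (fun _ => Set.Icc 0 L), ∏ m, g m (x m) =
      ∏ m, ∫ t in Set.Icc (0:ℝ) L, g m t := by
  rw [← integral_indicator (MeasurableSet.univ_pi fun _ => measurableSet_Icc)]
  have h : ∀ x : Fin N → ℝ,
      (Set.univ.pi (fun _ => Set.Icc 0 L)).indicator (fun x : Fin N → ℝ => ∏ m, g m (x m)) x =
        ∏ m, (Set.Icc (0:ℝ) L).indicator (g m) (x m) := by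
    intro x
    by_cases hx : x ∈ Set.univ.pi (fun _ : Fin N => Set.Icc (0:ℝ) L)
    · rw [Set.indicator_of_mem hx]
      exact Finset.prod_congr rfl fun m _ =>
        (Set.indicator_of_mem (hx m (Set.mem_univ m)) _).symm
    · rw [Set.indicator_of_notMem hx]
      rw [Set.mem_pi] at hx
      push_neg at hx
      obtain ⟨m, -, hm⟩ := hx
      exact (Finset.prod_eq_zero (Finset.mem_univ m) (Set.indicator_of_notMem hm _)).symm
  simp_rw [h]
  rw [MeasureTheory.volume_pi, MeasureTheory.integral_fintype_prod_eq_prod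
    (f := fun m t => (Set.Icc (0:ℝ) L).indicator (g m) t)]
  exact Finset.prod_congr rfl fun m _ => integral_indicator measurableSet_Icc

lemma prod_reindex (N : ℕ) (L : ℝ) (x : Fin N → ℝ) (σ τ : Equiv.Perm (Fin N)) :
    (∏ i : Fin N, Complex.exp ((2 * π * x (σ i) / L : ℝ) * Complex.I) ^ (i : ℕ)) *
      ∏ i : Fin N, (starRingEnd ℂ) (Complex.exp ((2 * π * x (τ i) / L : ℝ) * Complex.I) ^ (i : ℕ)) =
    ∏ m : Fin N, Complex.exp
      (2 * π * Complex.I * ((((σ⁻¹ m : Fin N) : ℕ) : ℤ) - (((τ⁻¹ m : Fin N) : ℕ) : ℤ)) * x m / L) := by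
  have h1 : (∏ i : Fin N, Complex.exp ((2 * π * x (σ i) / L : ℝ) * Complex.I) ^ (i : ℕ)) =
      ∏ m : Fin N, Complex.exp ((2 * π * x m / L : ℝ) * Complex.I) ^ ((σ⁻¹ m : Fin N) : ℕ) := by
    rw [← Equiv.prod_comp σ (fun m => Complex.exp ((2 * π * x m / L : ℝ) * Complex.I) ^ ((σ⁻¹ m : Fin N) : ℕ))]
    simp
  have h2 : (∏ i : Fin N, (starRingEnd ℂ) (Complex.exp ((2 * π * x (τ i) / L : ℝ) * Complex.I) ^ (i : ℕ))) =
      ∏ m : Fin N, (starRingEnd ℂ) (Complex.exp ((2 * π * x m / L : ℝ) * Complex.I)) ^ ((τ⁻¹ m : Fin N) : ℕ) := by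
    simp_rw [map_pow]
    rw [← Equiv.prod_comp τ (fun m => (starRingEnd ℂ) (Complex.exp ((2 * π * x m / L : ℝ) * Complex.I)) ^ ((τ⁻¹ m : Fin N) : ℕ))]
    simp
  rw [h1, h2, ← Finset.prod_mul_distrib]
  refine Finset.prod_congr rfl fun m _ => ?_
  rw [← Complex.exp_conj, ← Complex.exp_nat_mul, ← Complex.exp_nat_mul, ← Complex.exp_add]
  congr 1
  rw [map_mul, Complex.conj_ofReal, Complex.conj_I]
  push_cast
  ring

lemma key_integral (N : ℕ) (L : ℝ) (hL : 0 < L) :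
    ∫ x : Fin N → ℝ in Set.univ.pi (fun _ => Set.Icc 0 L),
      ((Complex.normSq
        (Matrix.det (Matrix.vandermonde fun m => Complex.exp ((2 * π * x m / L : ℝ) * Complex.I))) : ℝ) : ℂ)
      = (N.factorial : ℂ) * (L : ℂ) ^ N := by
  have expand : ∀ x : Fin N → ℝ,
      ((Complex.normSq
        (Matrix.det (Matrix.vandermonde fun m => Complex.exp ((2 * π * x m / L : ℝ) * Complex.I))) : ℝ) : ℂ)
      = ∑ σ : Equiv.Perm (Fin N), ∑ τ : Equiv.Perm (Fin N),
          (((Equiv.Perm.sign σ : ℤ) : ℂ) * ((Equiv.Perm.sign τ : ℤ) : ℂ)) *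
            ∏ m : Fin N, Complex.exp
              (2 * π * Complex.I * ((((σ⁻¹ m : Fin N) : ℕ) : ℤ) - (((τ⁻¹ m : Fin N) : ℕ) : ℤ)) * x m / L) := by
    intro x
    rw [← Complex.mul_conj]
    rw [Matrix.det_apply']
    rw [map_sum, Finset.sum_mul_sum]
    refine Finset.sum_congr rfl fun σ _ => Finset.sum_congr rfl fun τ _ => ?_
    rw [map_mul, map_intCast]
    simp only [Matrix.vandermonde_apply]
    rw [map_prod]
    rw [show ∀ a b c d : ℂ, (a * b) * (c * d) = (a * c) * (b * d) by intros; ring]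
    rw [prod_reindex N L x σ τ]
  simp_rw [expand]
  have hcompact : IsCompact (Set.univ.pi fun _ : Fin N => Set.Icc (0:ℝ) L) :=
    isCompact_univ_pi fun _ => isCompact_Icc
  have hint : ∀ σ τ : Equiv.Perm (Fin N), IntegrableOn
      (fun x : Fin N → ℝ =>
        (((Equiv.Perm.sign σ : ℤ) : ℂ) * ((Equiv.Perm.sign τ : ℤ) : ℂ)) *
          ∏ m : Fin N, Complex.exp
            (2 * π * Complex.I * ((((σ⁻¹ m : Fin N) : ℕ) : ℤ) - (((τ⁻¹ m : Fin N) : ℕ) : ℤ)) * x m / L))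
      (Set.univ.pi fun _ : Fin N => Set.Icc (0:ℝ) L) := by
    intro σ τ
    refine ContinuousOn.integrableOn_compact hcompact (Continuous.continuousOn ?_)
    refine continuous_const.mul (continuous_finset_prod _ fun m _ => Complex.continuous_exp.comp ?_)
    exact (continuous_const.mul (Complex.continuous_ofReal.comp (continuous_apply m))).div_const _
  rw [integral_finset_sum _ (fun σ _ => integrable_finset_sum _ (fun τ _ => hint σ τ))]
  have step : ∀ σ τ : Equiv.Perm (Fin N),
      (∫ x : Fin N → ℝ in Set.univ.pi (fun _ => Set.Icc 0 L),
        (((Equiv.Perm.sign σ : ℤ) : ℂ) * ((Equiv.Perm.sign τ : ℤ) : ℂ)) *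
          ∏ m : Fin N, Complex.exp
            (2 * π * Complex.I * ((((σ⁻¹ m : Fin N) : ℕ) : ℤ) - (((τ⁻¹ m : Fin N) : ℕ) : ℤ)) * x m / L))
      = if σ = τ then (L : ℂ) ^ N else 0 := by
    intro σ τ
    rw [integral_const_mul]
    rw [box_factor N L (fun m t => Complex.exp
      (2 * π * Complex.I * ((((σ⁻¹ m : Fin N) : ℕ) : ℤ) - (((τ⁻¹ m : Fin N) : ℕ) : ℤ)) * t / L))]
    have heval : ∀ m : Fin N,
        (∫ t in Set.Icc (0:ℝ) L, Complex.exp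
          (2 * π * Complex.I * ((((σ⁻¹ m : Fin N) : ℕ) : ℤ) - (((τ⁻¹ m : Fin N) : ℕ) : ℤ)) * t / L))
        = if σ⁻¹ m = τ⁻¹ m then (L : ℂ) else 0 := by
      intro m
      rw [show ((((σ⁻¹ m : Fin N) : ℕ) : ℤ) - (((τ⁻¹ m : Fin N) : ℕ) : ℤ) : ℂ)
          = (((((σ⁻¹ m : Fin N) : ℕ) : ℤ) - (((τ⁻¹ m : Fin N) : ℕ) : ℤ) : ℤ) : ℂ) by push_cast; ring]
      rw [intE L hL _]
      simp [sub_eq_zero, Fin.val_inj]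
    rcases eq_or_ne σ τ with h | h
    · subst h
      have hs : ((Equiv.Perm.sign σ : ℤ) : ℂ) * ((Equiv.Perm.sign σ : ℤ) : ℂ) = 1 := by
        have h2 : (Equiv.Perm.sign σ : ℤ) * (Equiv.Perm.sign σ : ℤ) = 1 := by
          rcases Int.units_eq_one_or (Equiv.Perm.sign σ) with h | h <;> simp [h]
        rw [← Int.cast_mul, h2, Int.cast_one]
      simp [heval, hs, Finset.prod_const, Finset.card_univ, Fintype.card_fin,
        ENNReal.toReal_ofReal hL.le, max_eq_left hL.le]
    · rw [if_neg h]
      have : σ⁻¹ ≠ τ⁻¹ := fun hc => h (by rw [← inv_inv σ, hc, inv_inv])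
      obtain ⟨m, hm⟩ : ∃ m, σ⁻¹ m ≠ τ⁻¹ m := by
        by_contra hc
        push_neg at hc
        exact this (Equiv.ext hc)
      rw [Finset.prod_eq_zero (Finset.mem_univ m) (by rw [heval m, if_neg hm]), mul_zero]
  rw [Finset.sum_congr rfl (fun σ _ => integral_finset_sum _ (fun τ _ => hint σ τ))]
  rw [Finset.sum_congr rfl (fun σ _ => Finset.sum_congr rfl (fun τ _ => step σ τ))]
  rw [Finset.sum_congr rfl (fun σ _ => Finset.sum_ite_eq Finset.univ σ (fun _ => (L:ℂ)^N))]
  simp [Finset.sum_const, Finset.card_univ, Fintype.card_perm, Fintype.card_fin, mul_comm]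

/-- Ground state wavefunction of `n` impenetrable bosons on a circle of circumference `L`. -/
noncomputable def psiC (L : ℝ) (n : ℕ) (x : Fin n → ℝ) : ℝ :=
  (Real.sqrt (L ^ n * n.factorial))⁻¹ *
    ∏ j : Fin n, ∏ k ∈ Finset.Ioi j, 2 * |Real.sin (π * (x k - x j) / L)|

theorem wavefunction_normalized (N : ℕ) (L : ℝ) (hL : 0 < L) :
    ∫ x : Fin N → ℝ in Set.univ.pi (fun _ => Set.Icc 0 L), (psiC L N x) ^ 2 = 1 := by
  have hkey : ∫ x : Fin N → ℝ in Set.univ.pi (fun _ => Set.Icc 0 L),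
      Complex.normSq
        (Matrix.det (Matrix.vandermonde fun m => Complex.exp ((2 * π * x m / L : ℝ) * Complex.I)))
      = (N.factorial : ℝ) * L ^ N := by
    have h := key_integral N L hL
    set g : (Fin N → ℝ) → ℝ := fun x => Complex.normSq
      (Matrix.det (Matrix.vandermonde fun m => Complex.exp ((2 * π * x m / L : ℝ) * Complex.I)))
      with hg
    have h2 : (∫ x : Fin N → ℝ in Set.univ.pi (fun _ => Set.Icc 0 L), ((g x : ℝ) : ℂ))
        = ((∫ x : Fin N → ℝ in Set.univ.pi (fun _ => Set.Icc 0 L), g x : ℝ) : ℂ) :=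
      integral_ofReal
    rw [h2] at h
    exact_mod_cast h
  have hpt : ∀ x : Fin N → ℝ, (psiC L N x) ^ 2 =
      (L ^ N * (N.factorial : ℝ))⁻¹ *
        Complex.normSq
          (Matrix.det (Matrix.vandermonde fun m => Complex.exp ((2 * π * x m / L : ℝ) * Complex.I))) := by
    intro x
    rw [psiC, mul_pow, ← sq_prod_eq_normSq N L hL x, inv_pow,
      Real.sq_sqrt (by positivity)]
  simp_rw [hpt]
  rw [integral_const_mul, hkey]
  have hpos : (0:ℝ) < L ^ N * (N.factorial : ℝ) := by positivity
  field_simp
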